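/- Let P_W = I_p − W(WᵀW)⁻¹Wᵀ and P_X = I_n − X(XᵀX)⁻¹Xᵀ be orthogonal projections, with H_X ∈ ℝ^{(n−q₂)×n} and H_W ∈ ℝ^{(p−q₁)×p} satisfying H_XᵀH_X = P_X, H_XH_Xᵀ = I, H_WᵀH_W = P_W, H_WH_Wᵀ = I. For Y ∈ ℝ^{n×p}, set R = P_X Y P_W and Ỹ = H_X Y H_Wᵀ. Then R(RᵀR)⁻Rᵀ = H_Xᵀ (Ỹ(ỸᵀỸ)⁻Ỹᵀ) H_X. -/
import Mathlib


open Matrix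

/-- The four Penrose conditions characterizing the Moore–Penrose pseudoinverse. -/
def IsMoorePenrose {m n : Type*} [Fintype m] [Fintype n]
    (A : Matrix m n ℝ) (Ap : Matrix n m ℝ) : Prop :=
  A * Ap * A = A ∧ Ap * A * Ap = Ap ∧ (A * Ap)ᵀ = A * Ap ∧ (Ap * A)ᵀ = Ap * A

/-- Uniqueness of the Moore–Penrose pseudoinverse. -/
lemma mp_unique {m n : Type*} [Fintype m] [Fintype n]
    (A : Matrix m n ℝ) (G1 G2 : Matrix n m ℝ)
    (h1 : IsMoorePenrose A G1) (h2 : IsMoorePenrose A G2) : G1 = G2 := by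
  obtain ⟨a1, b1, c1, d1⟩ := h1
  obtain ⟨a2, b2, c2, d2⟩ := h2
  have e1 : A * G1 = A * G2 := by
    have h : A * G2 * A * G1 = A * G2 := by
      calc A * G2 * A * G1 = (A * G2) * (A * G1) := by simp only [Matrix.mul_assoc]
      _ = (A * G2)ᵀ * (A * G1)ᵀ := by rw [c1, c2]
      _ = ((A * G1) * (A * G2))ᵀ := by rw [← transpose_mul]
      _ = ((A * G1 * A) * G2)ᵀ := by simp only [Matrix.mul_assoc]
      _ = (A * G2)ᵀ := by rw [a1]
      _ = A * G2 := c2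
    rw [a2] at h
    exact h
  have e2 : G1 * A = G2 * A := by
    have h : G1 * (A * G2 * A) = G2 * A := by
      calc G1 * (A * G2 * A) = (G1 * A) * (G2 * A) := by simp only [Matrix.mul_assoc]
      _ = (G1 * A)ᵀ * (G2 * A)ᵀ := by rw [d1, d2]
      _ = ((G2 * A) * (G1 * A))ᵀ := by rw [← transpose_mul]
      _ = (G2 * (A * G1 * A))ᵀ := by simp only [Matrix.mul_assoc]
      _ = (G2 * A)ᵀ := by rw [a1]
      _ = G2 * A := d2
    rw [a2] at h
    exact h
  calc G1 = G1 * A * G1 := b1.symm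
  _ = (G2 * A) * G1 := by rw [e2]
  _ = G2 * (A * G1) := by rw [Matrix.mul_assoc]
  _ = G2 * (A * G2) := by rw [e1]
  _ = G2 * A * G2 := by rw [Matrix.mul_assoc]
  _ = G2 := b2

/-- Conjugating a Moore–Penrose pair by a matrix with orthonormal rows. -/
lemma conj_mp {m k : Type} [Fintype m] [Fintype k] [DecidableEq k]
    (H : Matrix k m ℝ) (hH : H * Hᵀ = 1) (A G : Matrix k k ℝ)
    (h : IsMoorePenrose A G) : IsMoorePenrose (Hᵀ * A * H) (Hᵀ * G * H) := by
  obtain ⟨a, b, c, d⟩ := h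
  have key : ∀ {l : Type} [Fintype l] (Z : Matrix k l ℝ), H * (Hᵀ * Z) = Z := by
    intro l _ Z; rw [← Matrix.mul_assoc, hH, Matrix.one_mul]
  have a' : ∀ {l : Type} [Fintype l] (Z : Matrix k l ℝ), A * (G * (A * Z)) = A * Z := by
    intro l _ Z
    rw [← Matrix.mul_assoc, ← Matrix.mul_assoc, a]
  have b' : ∀ {l : Type} [Fintype l] (Z : Matrix k l ℝ), G * (A * (G * Z)) = G * Z := by
    intro l _ Z
    rw [← Matrix.mul_assoc, ← Matrix.mul_assoc, b]
  have c' : ∀ {l : Type} [Fintype l] (Z : Matrix k l ℝ), Gᵀ * (Aᵀ * Z) = A * (G * Z) := by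
    intro l _ Z
    rw [← Matrix.mul_assoc, ← transpose_mul, c, Matrix.mul_assoc]
  have d' : ∀ {l : Type} [Fintype l] (Z : Matrix k l ℝ), Aᵀ * (Gᵀ * Z) = G * (A * Z) := by
    intro l _ Z
    rw [← Matrix.mul_assoc, ← transpose_mul, d, Matrix.mul_assoc]
  refine ⟨?_, ?_, ?_, ?_⟩
  · simp only [Matrix.mul_assoc, key, a']
  · simp only [Matrix.mul_assoc, key, b']
  · simp only [Matrix.mul_assoc, key, transpose_mul, transpose_transpose, c']
  · simp only [Matrix.mul_assoc, key, transpose_mul, transpose_transpose, d']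

/-- With `R = P_X Y P_W` and `Ỹ = H_X Y H_Wᵀ` (where `H_XᵀH_X = P_X`,
`H_XH_Xᵀ = I`, `H_WᵀH_W = P_W`, `H_WH_Wᵀ = I`), one has
`R(RᵀR)⁻Rᵀ = H_Xᵀ (Ỹ(ỸᵀỸ)⁻Ỹᵀ) H_X`. -/
theorem stmt19 {n p q₁ q₂ : ℕ}
    (W : Matrix (Fin p) (Fin q₁) ℝ) (hq₁ : q₁ < p) (hW : W.rank = q₁)
    (X : Matrix (Fin n) (Fin q₂) ℝ) (hq₂ : q₂ < n) (hX : X.rank = q₂)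
    (HX : Matrix (Fin (n - q₂)) (Fin n) ℝ)
    (HW : Matrix (Fin (p - q₁)) (Fin p) ℝ)
    (hHX1 : HXᵀ * HX = (1 : Matrix (Fin n) (Fin n) ℝ) - X * (Xᵀ * X)⁻¹ * Xᵀ)
    (hHX2 : HX * HXᵀ = 1)
    (hHW1 : HWᵀ * HW = (1 : Matrix (Fin p) (Fin p) ℝ) - W * (Wᵀ * W)⁻¹ * Wᵀ)
    (hHW2 : HW * HWᵀ = 1)
    (Y : Matrix (Fin n) (Fin p) ℝ) :
    let PX := (1 : Matrix (Fin n) (Fin n) ℝ) - X * (Xᵀ * X)⁻¹ * Xᵀ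
    let PW := (1 : Matrix (Fin p) (Fin p) ℝ) - W * (Wᵀ * W)⁻¹ * Wᵀ
    let R := PX * Y * PW
    let Yt := HX * Y * HWᵀ
    ∀ (GR : Matrix (Fin p) (Fin p) ℝ) (GY : Matrix (Fin (p - q₁)) (Fin (p - q₁)) ℝ),
      IsMoorePenrose (Rᵀ * R) GR → IsMoorePenrose (Ytᵀ * Yt) GY →
      R * GR * Rᵀ = HXᵀ * (Yt * GY * Ytᵀ) * HX := by
  intro PX PW R Yt GR GY hGR hGY
  have kX : ∀ {l : Type} [Fintype l] (Z : Matrix (Fin (n - q₂)) l ℝ),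
      HX * (HXᵀ * Z) = Z := by
    intro l _ Z; rw [← Matrix.mul_assoc, hHX2, Matrix.one_mul]
  have kW : ∀ {l : Type} [Fintype l] (Z : Matrix (Fin (p - q₁)) l ℝ),
      HW * (HWᵀ * Z) = Z := by
    intro l _ Z; rw [← Matrix.mul_assoc, hHW2, Matrix.one_mul]
  have hR : R = HXᵀ * Yt * HW := by
    show (1 - X * (Xᵀ * X)⁻¹ * Xᵀ) * Y * (1 - W * (Wᵀ * W)⁻¹ * Wᵀ)
        = HXᵀ * (HX * Y * HWᵀ) * HW
    rw [← hHX1, ← hHW1]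
    simp only [Matrix.mul_assoc]
  have hRt : Rᵀ = HWᵀ * Ytᵀ * HX := by
    rw [hR]
    simp only [transpose_mul, transpose_transpose, Matrix.mul_assoc]
  have hRtR : Rᵀ * R = HWᵀ * (Ytᵀ * Yt) * HW := by
    rw [hRt, hR]
    simp only [Matrix.mul_assoc, kX]
  have hcand : IsMoorePenrose (Rᵀ * R) (HWᵀ * GY * HW) := by
    rw [hRtR]
    exact conj_mp HW hHW2 (Ytᵀ * Yt) GY hGY
  have hGReq : GR = HWᵀ * GY * HW := mp_unique _ _ _ hGR hcand
  rw [hGReq, hRt, hR]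
  simp only [Matrix.mul_assoc, kW]
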